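/- arXiv:1209.3642 — 3 statements merged into one kernel-verified Lean document; each statement's English description precedes it below -/
import Mathlib

section
/- Let ρ : ℝ³ → ℝ be nonnegative, integrable, and radially symmetric. Then for every x ≠ 0, ∫ ρ(y)/|x - y| dy = ∫ ρ(y)/max(|x|,|y|) dy (Newton's theorem for radial densities). -/
/-!
After a reflection we may take `x = a • e₀` with `a = ‖x‖`. Polar decomposition of Lebesgue
measure shows that the radial function `ρ` agrees a.e. with `g ‖y‖` for a *measurable* profile `g`.
In spherical coordinates around the `e₀`-axis, both integrals then become
`C ∫₀^∞ r² g(r) ∫₀^π sin θ K(r, θ) dθ dr`, and for `r ≠ a` the angular integral of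
`K = (a² + r² - 2ar cos θ)^(-1/2)` equals `2 / max a r`, which is also the angular integral of
`K = 1 / max a r`.
-/

open MeasureTheory Set Metric Real
open scoped ENNReal

section PolarDecomposition

theorem norm_smul_unitSphere {E : Type*} [NormedAddCommGroup E] [NormedSpace ℝ E]
    (ω : sphere (0 : E) 1) (r : Ioi (0 : ℝ)) : ‖(r : ℝ) • (ω : E)‖ = r := by
  simp [norm_smul, abs_of_pos r.2.out]

theorem measurableEmbedding_smul_unitSphere {E : Type*} [NormedAddCommGroup E]
    [NormedSpace ℝ E] [MeasurableSpace E] [BorelSpace E] :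
    MeasurableEmbedding (fun z : sphere (0 : E) 1 × Ioi (0 : ℝ) => (z.2 : ℝ) • (z.1 : E)) :=
  (MeasurableEmbedding.subtype_coe (measurableSet_singleton _).compl).comp
    (homeomorphUnitSphereProd E).symm.measurableEmbedding

variable {E : Type*} [NormedAddCommGroup E] [NormedSpace ℝ E] [Nontrivial E]
  [MeasurableSpace E] [BorelSpace E] [FiniteDimensional ℝ E]
  (μ : Measure E) [μ.IsAddHaarMeasure]

theorem measurePreserving_smul_unitSphere :
    MeasurePreserving (fun z : sphere (0 : E) 1 × Ioi (0 : ℝ) => (z.2 : ℝ) • (z.1 : E))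
      (μ.toSphere.prod (Measure.volumeIoiPow (Module.finrank ℝ E - 1))) μ := by
  have hval : MeasurePreserving ((↑) : ({0}ᶜ : Set E) → E) (μ.comap (↑)) μ :=
    ⟨measurable_subtype_coe, by
      rw [map_comap_subtype_coe (measurableSet_singleton _).compl, restrict_compl_singleton]⟩
  exact hval.comp (MeasurePreserving.symm (homeomorphUnitSphereProd E).toMeasurableEquiv
    μ.measurePreserving_homeomorphUnitSphereProd)

theorem lintegral_fun_norm_addHaar {φ : ℝ → ℝ≥0∞} (hφ : Measurable φ) :
    ∫⁻ x, φ ‖x‖ ∂μ = μ.toSphere univ *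
      ∫⁻ r in Ioi 0, ENNReal.ofReal (r ^ (Module.finrank ℝ E - 1)) * φ r := by
  rw [← (measurePreserving_smul_unitSphere μ).lintegral_comp_emb
    measurableEmbedding_smul_unitSphere]
  simp only [norm_smul_unitSphere]
  rw [lintegral_prod _ (by fun_prop)]
  dsimp only
  rw [lintegral_const, mul_comm, Measure.volumeIoiPow,
    lintegral_withDensity_eq_lintegral_mul _ (by fun_prop) (by fun_prop)]
  exact congrArg _ (lintegral_subtype_comap measurableSet_Ioi
    fun r => ENNReal.ofReal (r ^ (Module.finrank ℝ E - 1)) * φ r)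

/-- A radial function need not be measurable along any given ray; the profile comes from the
product structure `sphere × (0, ∞)` of `μ`, on which `f` depends only on the second factor. -/
theorem exists_stronglyMeasurable_ae_eq_comp_norm {X : Type*} [TopologicalSpace X]
    {f : E → X} (hf : AEStronglyMeasurable f μ) (hrad : ∀ y z, ‖y‖ = ‖z‖ → f y = f z) :
    ∃ g : ℝ → X, StronglyMeasurable g ∧ f =ᵐ[μ] fun y => g ‖y‖ := by
  obtain ⟨e, he⟩ := exists_norm_eq E zero_le_one
  set ν := Measure.volumeIoiPow (Module.finrank ℝ E - 1)
  have hpolar := measurePreserving_smul_unitSphere μ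
  have hray (z : sphere (0 : E) 1 × Ioi (0 : ℝ)) : f ((z.2 : ℝ) • (z.1 : E)) = f ((z.2 : ℝ) • e) :=
    hrad _ _ (by rw [norm_smul_unitSphere, norm_smul, he, mul_one, norm_of_nonneg z.2.2.out.le])
  have hprofile : AEStronglyMeasurable (fun r : ℝ => f (r • e)) (ν.map (↑)) := by
    rw [(MeasurableEmbedding.subtype_coe measurableSet_Ioi).aestronglyMeasurable_map_iff,
      ← AEStronglyMeasurable.comp_snd_iff μ.toSphere_ne_zero]
    simpa only [Function.comp_def, hray] using
      (hpolar.aestronglyMeasurable_comp_iff measurableEmbedding_smul_unitSphere).2 hf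
  refine ⟨hprofile.mk _, hprofile.stronglyMeasurable_mk, ?_⟩
  have hae : ∀ᵐ r : Ioi (0 : ℝ) ∂ν, f ((r : ℝ) • e) = hprofile.mk _ r :=
    ae_eq_comp measurable_subtype_coe.aemeasurable hprofile.ae_eq_mk
  rw [Filter.EventuallyEq, ← hpolar.map_eq, measurableEmbedding_smul_unitSphere.ae_map_iff]
  filter_upwards [Measure.quasiMeasurePreserving_snd.ae hae] with z hz
  rw [hray, hz, norm_smul_unitSphere]

end PolarDecomposition

section SphericalCoordinates

theorem measurePreserving_toLp_finCons (n : ℕ) :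
    MeasurePreserving fun p : ℝ × EuclideanSpace ℝ (Fin n) =>
      WithLp.toLp 2 (Fin.cons p.1 p.2.ofLp : Fin (n + 1) → ℝ) := by
  convert (PiLp.volume_preserving_toLp (Fin (n + 1))).comp
    ((volume_preserving_piFinSuccAbove (fun _ : Fin (n + 1) => ℝ) 0).symm.comp
      ((MeasurePreserving.id volume).prod (PiLp.volume_preserving_ofLp (Fin n)))) using 1
  · ext p i
    simp [MeasurableEquiv.piFinSuccAbove_symm_apply]
  · exact Measure.volume_eq_prod _ _

theorem lintegral_euclideanSpace_fin_succ {n : ℕ} {F : EuclideanSpace ℝ (Fin (n + 1)) → ℝ≥0∞}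
    (hF : Measurable F) :
    ∫⁻ y, F y = ∫⁻ t, ∫⁻ q : EuclideanSpace ℝ (Fin n), F (WithLp.toLp 2 (Fin.cons t q.ofLp)) := by
  rw [← (measurePreserving_toLp_finCons n).lintegral_comp hF, Measure.volume_eq_prod]
  exact lintegral_prod _ (hF.comp (measurePreserving_toLp_finCons n).measurable).aemeasurable

theorem norm_toLp_finCons {n : ℕ} (t : ℝ) (q : EuclideanSpace ℝ (Fin n)) :
    ‖(WithLp.toLp 2 (Fin.cons t q.ofLp : Fin (n + 1) → ℝ))‖ = √(t ^ 2 + ‖q‖ ^ 2) := by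
  rw [EuclideanSpace.norm_eq, EuclideanSpace.norm_eq, sq_sqrt (by positivity), Fin.sum_univ_succ]
  simp

theorem lintegral_upperHalfPlane_eq_polarCoord {Ψ : ℝ × ℝ → ℝ≥0∞} (hΨ : Measurable Ψ) :
    ∫⁻ t, ∫⁻ s in Ioi 0, Ψ (t, s) =
      ∫⁻ r in Ioi 0, ∫⁻ θ in Ioo 0 π, ENNReal.ofReal r * Ψ (r * cos θ, r * sin θ) := by
  have hhalf : MeasurableSet (univ ×ˢ Ioi (0 : ℝ) : Set (ℝ × ℝ)) :=
    MeasurableSet.univ.prod measurableSet_Ioi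
  have hsector : MeasurableSet (Ioi (0 : ℝ) ×ˢ Ioo 0 π) := measurableSet_Ioi.prod measurableSet_Ioo
  have hcut : ∀ p ∈ polarCoord.target,
      ENNReal.ofReal p.1 • (univ ×ˢ Ioi 0).indicator Ψ (polarCoord.symm p) =
        (Ioi 0 ×ˢ Ioo 0 π).indicator (fun p => ENNReal.ofReal p.1 * Ψ (polarCoord.symm p)) p := by
    rintro ⟨r, θ⟩ ⟨hr : 0 < r, hθ : θ ∈ Ioo (-π) π⟩
    by_cases hθ0 : 0 < θ
    · have hsin : 0 < r * sin θ := mul_pos hr (sin_pos_of_pos_of_lt_pi hθ0 hθ.2)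
      rw [indicator_of_mem (by simpa [polarCoord_symm_apply] using hsin),
        indicator_of_mem (by exact ⟨hr, hθ0, hθ.2⟩), smul_eq_mul]
    · have hsin : r * sin θ ≤ 0 := mul_nonpos_of_nonneg_of_nonpos hr.le
        (sin_nonpos_of_nonpos_of_neg_pi_le (not_lt.1 hθ0) hθ.1.le)
      rw [indicator_of_notMem (by simpa [polarCoord_symm_apply] using hsin),
        indicator_of_notMem (by rintro ⟨-, h, -⟩; exact hθ0 h), smul_zero]
  calc ∫⁻ t, ∫⁻ s in Ioi 0, Ψ (t, s)
      = ∫⁻ p, (univ ×ˢ Ioi 0).indicator Ψ p := by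
        rw [lintegral_indicator hhalf, Measure.volume_eq_prod, ← Measure.prod_restrict,
          Measure.restrict_univ, lintegral_prod _ hΨ.aemeasurable]
    _ = ∫⁻ p in Ioi 0 ×ˢ Ioo 0 π, ENNReal.ofReal p.1 * Ψ (polarCoord.symm p) := by
        rw [← lintegral_comp_polarCoord_symm, setLIntegral_congr_fun
          polarCoord.open_target.measurableSet hcut, lintegral_indicator hsector,
          Measure.restrict_restrict hsector, inter_eq_left.2]
        rw [polarCoord_target]
        exact prod_mono_right (Ioo_subset_Ioo_left (neg_nonpos.2 pi_pos.le))
    _ = _ := by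
        rw [Measure.volume_eq_prod, ← Measure.prod_restrict, lintegral_prod _ (by fun_prop)]
        rfl

/-- Integration of a function of `(y 0, ‖y‖)` in spherical coordinates about the `e₀`-axis,
`y = (r cos θ, r sin θ ω)`. -/
theorem lintegral_fun_fst_norm_euclideanSpace (n : ℕ) {H : ℝ × ℝ → ℝ≥0∞} (hH : Measurable H) :
    ∫⁻ y : EuclideanSpace ℝ (Fin (n + 2)), H (y 0, ‖y‖) =
      (volume : Measure (EuclideanSpace ℝ (Fin (n + 1)))).toSphere univ *
        ∫⁻ r in Ioi 0, ENNReal.ofReal (r ^ (n + 1)) *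
          ∫⁻ θ in Ioo 0 π, ENNReal.ofReal (sin θ ^ n) * H (r * cos θ, r) := by
  have hpolar (r θ : ℝ) (hr : 0 < r) : √((r * cos θ) ^ 2 + (r * sin θ) ^ 2) = r := by
    rw [mul_pow, mul_pow, ← mul_add, cos_sq_add_sin_sq, mul_one, sqrt_sq hr.le]
  calc ∫⁻ y : EuclideanSpace ℝ (Fin (n + 2)), H (y 0, ‖y‖)
      = ∫⁻ t, ∫⁻ q : EuclideanSpace ℝ (Fin (n + 1)), H (t, √(t ^ 2 + ‖q‖ ^ 2)) := by
        rw [lintegral_euclideanSpace_fin_succ (by fun_prop)]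
        simp only [norm_toLp_finCons]
        rfl
    _ = (volume : Measure (EuclideanSpace ℝ (Fin (n + 1)))).toSphere univ *
          ∫⁻ t, ∫⁻ s in Ioi 0, ENNReal.ofReal (s ^ n) * H (t, √(t ^ 2 + s ^ 2)) := by
        have hslice (t : ℝ) := lintegral_fun_norm_addHaar
          (volume : Measure (EuclideanSpace ℝ (Fin (n + 1))))
          (φ := fun s => H (t, √(t ^ 2 + s ^ 2))) (by fun_prop)
        simp only [hslice, finrank_euclideanSpace_fin, Nat.add_sub_cancel]
        exact lintegral_const_mul _ (Measurable.lintegral_prod_right'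
          (f := fun p : ℝ × ℝ => ENNReal.ofReal (p.2 ^ n) * H (p.1, √(p.1 ^ 2 + p.2 ^ 2)))
          (by fun_prop))
    _ = _ := by
        rw [lintegral_upperHalfPlane_eq_polarCoord
          (Ψ := fun p => ENNReal.ofReal (p.2 ^ n) * H (p.1, √(p.1 ^ 2 + p.2 ^ 2))) (by fun_prop)]
        congr 1
        refine setLIntegral_congr_fun measurableSet_Ioi fun r (hr : 0 < r) => ?_
        rw [← lintegral_const_mul _ (by fun_prop)]
        refine setLIntegral_congr_fun measurableSet_Ioo fun θ hθ => ?_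
        rw [hpolar r θ hr, ← mul_assoc, ← mul_assoc, ← ENNReal.ofReal_mul hr.le,
          ← ENNReal.ofReal_mul (by positivity)]
        congr 2
        ring

end SphericalCoordinates

section AngularIntegral

theorem integral_sin_mul_inv_sqrt {a r : ℝ} (ha : 0 < a) (hr : 0 < r) (hne : r ≠ a) :
    ∫ θ in 0..π, sin θ * (√(a ^ 2 + r ^ 2 - 2 * a * r * cos θ))⁻¹ = 2 / max a r := by
  have hpos (θ : ℝ) : 0 < a ^ 2 + r ^ 2 - 2 * a * r * cos θ := by
    nlinarith [pow_pos (abs_pos.2 (sub_ne_zero.2 hne)) 2, sq_abs (r - a), cos_le_one θ,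
      mul_pos ha hr]
  have hderiv (θ : ℝ) : HasDerivAt (fun θ => √(a ^ 2 + r ^ 2 - 2 * a * r * cos θ) / (a * r))
      (sin θ * (√(a ^ 2 + r ^ 2 - 2 * a * r * cos θ))⁻¹) θ := by
    have hcos := ((hasDerivAt_cos θ).const_mul (2 * a * r)).const_sub (a ^ 2 + r ^ 2)
    refine ((hcos.sqrt (hpos θ).ne').div_const (a * r)).congr_deriv ?_
    have := (sqrt_pos.2 (hpos θ)).ne'
    field_simp
  have hcont : Continuous fun θ => sin θ * (√(a ^ 2 + r ^ 2 - 2 * a * r * cos θ))⁻¹ :=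
    continuous_sin.mul <| Continuous.inv₀ (by fun_prop) fun θ => (sqrt_pos.2 (hpos θ)).ne'
  rw [intervalIntegral.integral_eq_sub_of_hasDerivAt (fun θ _ => hderiv θ)
    (hcont.intervalIntegrable 0 π), cos_pi, cos_zero]
  have hplus : a ^ 2 + r ^ 2 - 2 * a * r * -1 = (a + r) ^ 2 := by ring
  have hminus : a ^ 2 + r ^ 2 - 2 * a * r * 1 = (r - a) ^ 2 := by ring
  rw [hplus, hminus, sqrt_sq (by positivity), sqrt_sq_eq_abs]
  rcases lt_or_gt_of_ne hne with h | h
  · rw [abs_of_neg (sub_neg.2 h), max_eq_left h.le]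
    field_simp
    ring
  · rw [abs_of_pos (sub_pos.2 h), max_eq_right h.le]
    field_simp
    ring

theorem setLIntegral_Ioo_ofReal_eq_intervalIntegral {f : ℝ → ℝ} {a b : ℝ} (hab : a ≤ b)
    (hf : IntervalIntegrable f volume a b) (hnn : ∀ x ∈ Ioo a b, 0 ≤ f x) :
    ∫⁻ x in Ioo a b, ENNReal.ofReal (f x) = ENNReal.ofReal (∫ x in a..b, f x) := by
  rw [intervalIntegral.integral_of_le hab, integral_Ioc_eq_integral_Ioo,
    ofReal_integral_eq_lintegral_ofReal (hf.1.mono_set Ioo_subset_Ioc_self)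
      ((ae_restrict_iff' measurableSet_Ioo).2 (.of_forall hnn))]

theorem setLIntegral_sin_mul_inv_sqrt_eq_inv_max {a r : ℝ} (ha : 0 < a) (hr : 0 < r)
    (hne : r ≠ a) :
    ∫⁻ θ in Ioo 0 π, ENNReal.ofReal (sin θ) *
        ENNReal.ofReal (√(a ^ 2 + r ^ 2 - 2 * a * r * cos θ))⁻¹ =
      ∫⁻ θ in Ioo 0 π, ENNReal.ofReal (sin θ) * ENNReal.ofReal (max a r)⁻¹ := by
  have hsin : ∀ θ ∈ Ioo 0 π, 0 ≤ sin θ := fun θ hθ =>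
    sin_nonneg_of_nonneg_of_le_pi hθ.1.le hθ.2.le
  have hmax : 0 ≤ (max a r)⁻¹ := inv_nonneg.2 (le_max_of_le_left ha.le)
  have hkernel := integral_sin_mul_inv_sqrt ha hr hne
  simp_rw [← ENNReal.ofReal_mul' hmax, ← ENNReal.ofReal_mul' (inv_nonneg.2 (sqrt_nonneg _))]
  rw [setLIntegral_Ioo_ofReal_eq_intervalIntegral pi_pos.le
      (intervalIntegral.intervalIntegrable_of_integral_ne_zero (by rw [hkernel]; positivity))
      fun θ hθ => mul_nonneg (hsin θ hθ) (inv_nonneg.2 (sqrt_nonneg _)),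
    setLIntegral_Ioo_ofReal_eq_intervalIntegral pi_pos.le (f := fun θ => sin θ * (max a r)⁻¹)
      ((continuous_sin.mul continuous_const).intervalIntegrable _ _)
      fun θ hθ => mul_nonneg (hsin θ hθ) hmax,
    hkernel, intervalIntegral.integral_mul_const, integral_sin, cos_pi, cos_zero]
  norm_num [div_eq_mul_inv]

end AngularIntegral

theorem integral_div_norm_sub_eq_of_norm_eq {E : Type*} [NormedAddCommGroup E]
    [InnerProductSpace ℝ E] [FiniteDimensional ℝ E] [MeasurableSpace E] [BorelSpace E]
    {f : E → ℝ} (hf : ∀ y z, ‖y‖ = ‖z‖ → f y = f z) {x x' : E} (hx : ‖x'‖ = ‖x‖) :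
    ∫ y, f y / ‖x - y‖ = ∫ y, f y / ‖x' - y‖ := by
  set R := Submodule.reflection (ℝ ∙ (x' - x))ᗮ
  rw [← R.measurePreserving.integral_comp R.toHomeomorph.measurableEmbedding]
  refine integral_congr_ae (.of_forall fun y => ?_)
  dsimp only
  rw [hf (R y) y (R.norm_map y), ← Submodule.reflection_sub hx, ← map_sub, R.norm_map]

theorem newton_theorem_radial (ρ : EuclideanSpace ℝ (Fin 3) → ℝ)
    (hpos : ∀ y, 0 ≤ ρ y) (hint : Integrable ρ)
    (hrad : ∀ y z : EuclideanSpace ℝ (Fin 3), ‖y‖ = ‖z‖ → ρ y = ρ z)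
    (x : EuclideanSpace ℝ (Fin 3)) (hx : x ≠ 0) :
    ∫ y, ρ y / ‖x - y‖ = ∫ y, ρ y / max ‖x‖ ‖y‖ := by
  set a := ‖x‖
  have ha : 0 < a := norm_pos_iff.2 hx
  set e : EuclideanSpace ℝ (Fin 3) := EuclideanSpace.single 0 1
  have hdist (y : EuclideanSpace ℝ (Fin 3)) :
      ‖a • e - y‖ = √(a ^ 2 + ‖y‖ ^ 2 - 2 * a * y 0) := by
    rw [← sqrt_sq (norm_nonneg _), norm_sub_sq_real, real_inner_smul_left,
      EuclideanSpace.inner_single_left, norm_smul, PiLp.norm_single, map_one, norm_one,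
      norm_of_nonneg ha.le]
    ring_nf
  obtain ⟨g, hg_sm, hρg⟩ := exists_stronglyMeasurable_ae_eq_comp_norm volume
    hint.aemeasurable.ennreal_ofReal.aestronglyMeasurable
    fun y z h => congrArg ENNReal.ofReal (hrad y z h)
  have hg := hg_sm.measurable
  set K₁ := fun p : ℝ × ℝ => g p.2 * ENNReal.ofReal (√(a ^ 2 + p.2 ^ 2 - 2 * a * p.1))⁻¹
  set K₂ := fun p : ℝ × ℝ => g p.2 * ENNReal.ofReal (max a p.2)⁻¹
  rw [integral_div_norm_sub_eq_of_norm_eq hrad (x' := a • e) (by simp [a, e, norm_smul]),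
    integral_eq_lintegral_of_nonneg_ae (.of_forall fun y => div_nonneg (hpos y) (norm_nonneg _))
      (hint.aemeasurable.div (by fun_prop)).aestronglyMeasurable,
    integral_eq_lintegral_of_nonneg_ae
      (.of_forall fun y => div_nonneg (hpos y) (ha.le.trans (le_max_left _ _)))
      (hint.aemeasurable.div (by fun_prop)).aestronglyMeasurable]
  congr 1
  calc ∫⁻ y, ENNReal.ofReal (ρ y / ‖a • e - y‖)
      = ∫⁻ y : EuclideanSpace ℝ (Fin 3), K₁ (y 0, ‖y‖) := by
        refine lintegral_congr_ae ?_
        filter_upwards [hρg] with y hy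
        rw [div_eq_mul_inv, ENNReal.ofReal_mul (hpos y), hy, hdist]
    _ = ∫⁻ y : EuclideanSpace ℝ (Fin 3), K₂ (y 0, ‖y‖) := by
        refine (lintegral_fun_fst_norm_euclideanSpace 1 (H := K₁) (by fun_prop)).trans
          (Eq.trans ?_ (lintegral_fun_fst_norm_euclideanSpace 1 (H := K₂) (by fun_prop)).symm)
        congr 1
        refine setLIntegral_congr_fun_ae measurableSet_Ioi ?_
        filter_upwards [Measure.ae_ne volume a] with r hra (hr : 0 < r)
        congr 1
        simp only [K₁, K₂, pow_one, mul_left_comm (ENNReal.ofReal (sin _)), ← mul_assoc (2 * a)]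
        rw [lintegral_const_mul _ (by fun_prop), lintegral_const_mul _ (by fun_prop),
          setLIntegral_sin_mul_inv_sqrt_eq_inv_max ha hr hra]
    _ = ∫⁻ y, ENNReal.ofReal (ρ y / max a ‖y‖) := by
        refine lintegral_congr_ae ?_
        filter_upwards [hρg] with y hy
        rw [div_eq_mul_inv, ENNReal.ofReal_mul (hpos y), hy]
end

section
/- For every smooth compactly supported u : ℝ³ → ℂ, Re ⟨(-Δ)u, |x| u⟩ ≥ 0; i.e., the operator inequality (-Δ)|x| + |x|(-Δ) ≥ 0 holds in L²(ℝ³). -/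
set_option linter.unusedSectionVars false
open MeasureTheory
noncomputable section
namespace NegLap

abbrev E3 := EuclideanSpace ℝ (Fin 3)
def ee (i : Fin 3) : E3 := EuclideanSpace.single i 1
def wf (ε : ℝ) (x : E3) : ℝ := Real.sqrt (‖x‖ ^ 2 + ε ^ 2)
def Du (u : E3 → ℂ) (i : Fin 3) (x : E3) : ℂ := fderiv ℝ u x (ee i)
def D2u (u : E3 → ℂ) (i : Fin 3) (x : E3) : ℂ :=
  fderiv ℝ (fun y => fderiv ℝ u y (ee i)) x (ee i)
def gE (ε : ℝ) (i : Fin 3) (x : E3) : ℝ := x i * (wf ε x)⁻¹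
def lap (ε : ℝ) (x : E3) : ℝ := 3 / wf ε x - ‖x‖ ^ 2 / wf ε x ^ 3
def P (u : E3 → ℂ) (i : Fin 3) (x : E3) : ℝ := (starRingEnd ℂ (u x) * Du u i x).re
def G (u : E3 → ℂ) (x : E3) : ℝ := ∑ i, ‖Du u i x‖ ^ 2

variable {ε : ℝ} {x : E3} {i : Fin 3}

lemma wf_pos (hε : ε ≠ 0) (x : E3) : 0 < wf ε x :=
  Real.sqrt_pos.2 (by positivity)

lemma wf_sq (x : E3) : wf ε x ^ 2 = ‖x‖ ^ 2 + ε ^ 2 :=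
  Real.sq_sqrt (by positivity)

lemma norm_le_wf (x : E3) : ‖x‖ ≤ wf ε x := by
  have h := Real.sqrt_le_sqrt (show ‖x‖ ^ 2 ≤ ‖x‖ ^ 2 + ε ^ 2 by nlinarith [sq_nonneg ε])
  rwa [Real.sqrt_sq (norm_nonneg x)] at h

lemma wf_cont : Continuous (wf ε) :=
  Real.continuous_sqrt.comp ((continuous_norm.pow 2).add continuous_const)

lemma norm_sq_eq_sum (x : E3) : ‖x‖ ^ 2 = ∑ i, x i ^ 2 := by
  rw [EuclideanSpace.norm_eq, Real.sq_sqrt (by positivity)]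
  simp [sq_abs]

lemma hasFDerivAt_wf (hε : ε ≠ 0) (x : E3) :
    HasFDerivAt (wf ε) ((wf ε x)⁻¹ • innerSL ℝ x) x := by
  have h0 : ‖x‖ ^ 2 + ε ^ 2 ≠ 0 := by positivity
  have h1 : HasFDerivAt (fun x : E3 => ‖x‖ ^ 2 + ε ^ 2) (2 • innerSL ℝ x) x :=
    (hasStrictFDerivAt_norm_sq x).hasFDerivAt.add_const _
  show HasFDerivAt (fun y : E3 => Real.sqrt (‖y‖ ^ 2 + ε ^ 2)) _ x
  refine (h1.sqrt h0).congr_fderiv ?_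
  ext y
  simp only [ContinuousLinearMap.smul_apply, smul_eq_mul, nsmul_eq_mul, wf]
  ring

lemma innerSL_apply_ee (x : E3) (i : Fin 3) : (innerSL ℝ x) (ee i) = x i := by
  simp [ee, EuclideanSpace.inner_single_right, real_inner_comm]

lemma fderiv_wf_apply (hε : ε ≠ 0) (x : E3) (i : Fin 3) :
    fderiv ℝ (wf ε) x (ee i) = gE ε i x := by
  rw [(hasFDerivAt_wf hε x).fderiv]
  rw [ContinuousLinearMap.smul_apply, innerSL_apply_ee, smul_eq_mul, gE, mul_comm]

lemma diff_wf (hε : ε ≠ 0) : Differentiable ℝ (wf ε) :=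
  fun x => (hasFDerivAt_wf hε x).differentiableAt

lemma hasFDerivAt_proj (x : E3) (i : Fin 3) :
    HasFDerivAt (fun y : E3 => y i) (EuclideanSpace.proj i : E3 →L[ℝ] ℝ) x :=
  (EuclideanSpace.proj i : E3 →L[ℝ] ℝ).hasFDerivAt

lemma hasFDerivAt_gE (hε : ε ≠ 0) (x : E3) (i : Fin 3) :
    HasFDerivAt (gE ε i)
      (x i • ((-(wf ε x ^ 2)⁻¹) • ((wf ε x)⁻¹ • innerSL ℝ x))
        + (wf ε x)⁻¹ • (EuclideanSpace.proj i : E3 →L[ℝ] ℝ)) x := by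
  have hinv : HasFDerivAt (fun y : E3 => (wf ε y)⁻¹)
      ((-(wf ε x ^ 2)⁻¹) • ((wf ε x)⁻¹ • innerSL ℝ x)) x :=
    (hasDerivAt_inv (wf_pos hε x).ne').comp_hasFDerivAt x (hasFDerivAt_wf hε x)
  exact (hasFDerivAt_proj x i).mul hinv

lemma fderiv_gE_apply (hε : ε ≠ 0) (x : E3) (i : Fin 3) :
    fderiv ℝ (gE ε i) x (ee i) = 1 / wf ε x - x i ^ 2 / wf ε x ^ 3 := by
  rw [(hasFDerivAt_gE hε x i).fderiv]
  have hw := (wf_pos hε x).ne'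
  rw [ContinuousLinearMap.add_apply, ContinuousLinearMap.smul_apply,
    ContinuousLinearMap.smul_apply, ContinuousLinearMap.smul_apply, innerSL_apply_ee,
    ContinuousLinearMap.smul_apply,
    show ((EuclideanSpace.proj i : E3 →L[ℝ] ℝ)) (ee i) = 1 by simp [ee]]
  simp only [smul_eq_mul]
  field_simp
  ring

lemma diff_gE (hε : ε ≠ 0) : Differentiable ℝ (gE ε i) :=
  fun x => (hasFDerivAt_gE hε x i).differentiableAt

lemma cont_gE (hε : ε ≠ 0) : Continuous (gE ε i) :=
  (diff_gE hε).continuous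

lemma sum_fderiv_gE (hε : ε ≠ 0) (x : E3) :
    ∑ i, fderiv ℝ (gE ε i) x (ee i) = lap ε x := by
  rw [Finset.sum_congr rfl (fun i _ => fderiv_gE_apply hε x i), Finset.sum_sub_distrib]
  simp only [Finset.sum_const, Finset.card_univ, Fintype.card_fin, nsmul_eq_mul]
  rw [← Finset.sum_div, ← norm_sq_eq_sum, lap]
  ring

section U
variable {u : E3 → ℂ} (hu : ContDiff ℝ (⊤ : ℕ∞) u) (hc : HasCompactSupport u)

def ρ (u : E3 → ℂ) (x : E3) : ℝ := ‖u x‖ ^ 2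

include hu in
lemma contDiff_Du (i : Fin 3) : ContDiff ℝ (⊤ : ℕ∞) (Du u i) :=
  (ContinuousLinearMap.apply ℝ ℂ (ee i)).contDiff.comp (hu.fderiv_right (by simp))

include hu in
lemma cont_Du (i : Fin 3) : Continuous (Du u i) := (contDiff_Du hu i).continuous

include hu in
lemma diff_Du (i : Fin 3) : Differentiable ℝ (Du u i) :=
  (contDiff_Du hu i).differentiable (by simp)

include hu in
lemma cont_D2u (i : Fin 3) : Continuous (D2u u i) := by
  have : ContDiff ℝ (⊤ : ℕ∞) (D2u u i) :=
    (ContinuousLinearMap.apply ℝ ℂ (ee i)).contDiff.comp ((contDiff_Du hu i).fderiv_right (by simp))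
  exact this.continuous

lemma Du_zero (i : Fin 3) {x : E3} (hx : x ∉ tsupport u) : Du u i x = 0 := by
  have : fderiv ℝ u x = 0 := by
    have := support_fderiv_subset (𝕜 := ℝ) (f := u)
    by_contra h
    exact hx (this h)
  simp [Du, this]

lemma tsupport_Du_subset (i : Fin 3) : tsupport (Du u i) ⊆ tsupport u := by
  apply closure_minimal _ (isClosed_tsupport u)
  intro x hx
  by_contra h
  exact hx (Du_zero i h)

omit hu in
include hc in
lemma D2u_zero (i : Fin 3) {x : E3} (hx : x ∉ tsupport u) : D2u u i x = 0 := by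
  have h1 : fderiv ℝ (fun y => fderiv ℝ u y (ee i)) x = 0 := by
    have := support_fderiv_subset (𝕜 := ℝ) (f := fun y => fderiv ℝ u y (ee i))
    by_contra h
    exact (fun hx2 => hx (tsupport_Du_subset i hx2)) (this h)
  simp [D2u, h1]

include hc in
lemma integrable_aux {F : Type*} [NormedAddCommGroup F] {f : E3 → F} (hf : Continuous f)
    (h0 : ∀ x, x ∉ tsupport u → f x = 0) : Integrable f (volume : Measure E3) := by
  apply hf.integrable_of_hasCompactSupport
  exact HasCompactSupport.intro hc h0

include hu in
lemma hasFDerivAt_rho (x : E3) :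
    HasFDerivAt (ρ u) (2 • (innerSL ℝ (u x)).comp (fderiv ℝ u x)) x :=
  ((hu.differentiable (by simp) x).hasFDerivAt).norm_sq

include hu in
lemma fderiv_rho_apply (x : E3) (i : Fin 3) :
    fderiv ℝ (ρ u) x (ee i) = 2 * P u i x := by
  rw [(hasFDerivAt_rho hu x).fderiv]
  simp [P, two_smul, Complex.mul_re, Du]
  ring

include hu in
lemma diff_rho : Differentiable ℝ (ρ u) := fun x => (hasFDerivAt_rho hu x).differentiableAt

include hu in
lemma cont_rho : Continuous (ρ u) := (diff_rho hu).continuous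


include hu hc in
lemma stepA (hε : ε ≠ 0) (i : Fin 3) :
    ∫ x, starRingEnd ℂ (D2u u i x) * ((wf ε x : ℂ) * u x) =
      -∫ x, starRingEnd ℂ (Du u i x) *
        ((gE ε i x : ℂ) * u x + (wf ε x : ℂ) * Du u i x) := by
  set f : E3 → ℂ := fun x => starRingEnd ℂ (Du u i x) with hfdef
  set g : E3 → ℂ := fun x => (wf ε x : ℂ) * u x with hgdef
  have hfd : ∀ x : E3, HasFDerivAt f
      ((Complex.conjCLE.toContinuousLinearMap).comp (fderiv ℝ (Du u i) x)) x := fun x =>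
    (Complex.conjCLE.toContinuousLinearMap.hasFDerivAt).comp x ((diff_Du hu i x).hasFDerivAt)
  have hf' : ∀ x, fderiv ℝ f x (ee i) = starRingEnd ℂ (D2u u i x) :=
    fun x => by rw [(hfd x).fderiv]; rfl
  have hwc : ∀ x : E3, HasFDerivAt (fun y => ((wf ε y : ℂ)))
      (Complex.ofRealCLM.comp ((wf ε x)⁻¹ • innerSL ℝ x)) x := fun x =>
    Complex.ofRealCLM.hasFDerivAt.comp x (hasFDerivAt_wf hε x)
  have hgd : ∀ x : E3, HasFDerivAt g
      ((wf ε x : ℂ) • fderiv ℝ u x + u x • (Complex.ofRealCLM.comp ((wf ε x)⁻¹ • innerSL ℝ x))) x :=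
    fun x => (hwc x).mul ((hu.differentiable (by simp) x).hasFDerivAt)
  have hg' : ∀ x, fderiv ℝ g x (ee i)
      = (gE ε i x : ℂ) * u x + (wf ε x : ℂ) * Du u i x := by
    intro x
    rw [(hgd x).fderiv]
    simp only [ContinuousLinearMap.add_apply, ContinuousLinearMap.smul_apply,
      ContinuousLinearMap.comp_apply, ContinuousLinearMap.smul_apply, innerSL_apply_ee,
      smul_eq_mul, Complex.ofRealCLM_apply]
    rw [show (fderiv ℝ u x) (ee i) = Du u i x from rfl]
    push_cast [gE]
    ring
  have hdf : Differentiable ℝ f := fun x => (hfd x).differentiableAt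
  have hdg : Differentiable ℝ g := fun x => (hgd x).differentiableAt
  have hgz : ∀ x, x ∉ tsupport u → g x = 0 := fun x hx => by
    simp [hgdef, image_eq_zero_of_notMem_tsupport hx]
  have hint1 : Integrable (fun x => fderiv ℝ f x (ee i) * g x) volume := by
    simp only [hf']
    exact integrable_aux hc ((Complex.continuous_conj.comp (cont_D2u hu i)).mul hdg.continuous)
      (fun x hx => by simp [hgz x hx])
  have hint2 : Integrable (fun x => f x * fderiv ℝ g x (ee i)) volume := by
    simp only [hg']
    apply integrable_aux hc
    · exact (Complex.continuous_conj.comp (cont_Du hu i)).mul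
        (((Complex.continuous_ofReal.comp (cont_gE hε)).mul hu.continuous).add
          ((Complex.continuous_ofReal.comp wf_cont).mul (cont_Du hu i)))
    · intro x hx
      simp [hfdef, Du_zero i hx]
  have hint3 : Integrable (fun x => f x * g x) volume :=
    integrable_aux hc (hdf.continuous.mul hdg.continuous) (fun x hx => by simp [hgz x hx])
  have h := integral_mul_fderiv_eq_neg_fderiv_mul_of_integrable hint1 hint2 hint3 (fun x _ => hdf x) (fun x _ => hdg x)
  simp only [hg', hf'] at h
  have h2 := congrArg Neg.neg h
  rw [neg_neg] at h2
  exact h2.symm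

include hu hc in
lemma stepB (hε : ε ≠ 0) (i : Fin 3) :
    ∫ x, gE ε i x * (2 * P u i x) =
      -∫ x, fderiv ℝ (gE ε i) x (ee i) * ρ u x := by
  have hrho' : ∀ x, fderiv ℝ (ρ u) x (ee i) = 2 * P u i x :=
    fun x => fderiv_rho_apply hu x i
  have hgE' : Continuous fun x => fderiv ℝ (gE ε i) x (ee i) := by
    have : (fun x => fderiv ℝ (gE ε i) x (ee i))
        = fun x => 1 / wf ε x - x i ^ 2 / wf ε x ^ 3 :=
      funext fun x => fderiv_gE_apply hε x i
    rw [this]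
    apply Continuous.sub
    · exact continuous_const.div wf_cont (fun x => (wf_pos hε x).ne')
    · refine Continuous.div ?_ (wf_cont.pow 3) (fun x => pow_ne_zero 3 (wf_pos hε x).ne')
      exact ((EuclideanSpace.proj i : E3 →L[ℝ] ℝ).continuous).pow 2
  have hrho0 : ∀ x, x ∉ tsupport u → ρ u x = 0 := fun x hx => by
    simp [ρ, image_eq_zero_of_notMem_tsupport hx]
  have hP0 : ∀ x, x ∉ tsupport u → P u i x = 0 := fun x hx => by
    simp [P, image_eq_zero_of_notMem_tsupport hx]
  have hcontP : Continuous (P u i) :=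
    Complex.continuous_re.comp ((Complex.continuous_conj.comp hu.continuous).mul (cont_Du hu i))
  have hint1 : Integrable (fun x => fderiv ℝ (gE ε i) x (ee i) * ρ u x) volume :=
    integrable_aux hc (hgE'.mul (cont_rho hu)) (fun x hx => by simp [hrho0 x hx])
  have hint2 : Integrable (fun x => gE ε i x * fderiv ℝ (ρ u) x (ee i)) volume := by
    simp only [hrho']
    exact integrable_aux hc ((cont_gE hε).mul (continuous_const.mul hcontP))
      (fun x hx => by simp [hP0 x hx])
  have hint3 : Integrable (fun x => gE ε i x * ρ u x) volume :=
    integrable_aux hc ((cont_gE hε).mul (cont_rho hu)) (fun x hx => by simp [hrho0 x hx])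
  have h := integral_mul_fderiv_eq_neg_fderiv_mul_of_integrable hint1 hint2 hint3
    (fun x _ => diff_gE hε x) (fun x _ => diff_rho hu x)
  simp only [hrho'] at h
  exact h


omit hu hc in
lemma amgm_aux {a b s : ℝ} (ha : 0 ≤ a) (hb : 0 ≤ b) (h : s ^ 2 ≤ a * b) :
    -s ≤ 1 / 2 * a + 1 / 2 * b := by
  nlinarith [sq_nonneg (a - b), sq_nonneg (a + b + 2 * s), sq_nonneg (a + b)]

omit hu hc in
lemma G_nonneg (x : E3) : 0 ≤ G u x :=
  Finset.sum_nonneg fun i _ => by positivity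

include hu in
omit hc in
lemma key_pointwise (hε : ε ≠ 0) (x : E3) :
    -∑ i, gE ε i x * P u i x ≤
      1 / 2 * (‖x‖ ^ 2 / wf ε x ^ 3 * ρ u x) + 1 / 2 * (wf ε x * G u x) := by
  have hw := wf_pos hε x
  have hG := G_nonneg (u := u) x
  have hρ : 0 ≤ ρ u x := by rw [ρ]; positivity
  have ht2 : (∑ i, x i * P u i x) ^ 2 ≤ ‖x‖ ^ 2 * (ρ u x * G u x) := by
    have h1 := Finset.sum_mul_sq_le_sq_mul_sq Finset.univ (fun i => x i) (fun i => P u i x)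
    have h2 : ∑ i, (P u i x) ^ 2 ≤ ρ u x * G u x := by
      rw [G, Finset.mul_sum]
      apply Finset.sum_le_sum
      intro i _
      have habs : |P u i x| ≤ ‖u x‖ * ‖Du u i x‖ := by
        calc |P u i x| ≤ ‖starRingEnd ℂ (u x) * Du u i x‖ := Complex.abs_re_le_norm _
        _ = ‖u x‖ * ‖Du u i x‖ := by rw [norm_mul, RingHomIsometric.norm_map]
      calc (P u i x) ^ 2 = |P u i x| ^ 2 := (sq_abs _).symm
      _ ≤ (‖u x‖ * ‖Du u i x‖) ^ 2 := by
          exact pow_le_pow_left₀ (abs_nonneg _) habs 2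
      _ = ρ u x * ‖Du u i x‖ ^ 2 := by rw [ρ]; ring
    calc (∑ i, x i * P u i x) ^ 2 ≤ (∑ i, x i ^ 2) * ∑ i, (P u i x) ^ 2 := h1
    _ ≤ ‖x‖ ^ 2 * (ρ u x * G u x) := by
        rw [← norm_sq_eq_sum]
        exact mul_le_mul_of_nonneg_left h2 (by positivity)
  have hsum : ∑ i, gE ε i x * P u i x = (∑ i, x i * P u i x) * (wf ε x)⁻¹ := by
    rw [Finset.sum_mul]
    exact Finset.sum_congr rfl fun i _ => by rw [gE]; ring
  rw [hsum]
  apply amgm_aux (mul_nonneg (by positivity) hρ) (mul_nonneg hw.le hG)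
  calc ((∑ i, x i * P u i x) * (wf ε x)⁻¹) ^ 2
      = (∑ i, x i * P u i x) ^ 2 / wf ε x ^ 2 := by
        rw [mul_pow, inv_pow]; exact (div_eq_mul_inv _ _).symm
  _ ≤ ‖x‖ ^ 2 * (ρ u x * G u x) / wf ε x ^ 2 := by
        exact div_le_div_of_nonneg_right ht2 (by positivity)
  _ = ‖x‖ ^ 2 / wf ε x ^ 3 * ρ u x * (wf ε x * G u x) := by
        field_simp


omit hu hc in
lemma cont_fderiv_gE (hε : ε ≠ 0) (i : Fin 3) :
    Continuous fun x => fderiv ℝ (gE ε i) x (ee i) := by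
  have h : (fun x => fderiv ℝ (gE ε i) x (ee i))
      = fun x => 1 / wf ε x - x i ^ 2 / wf ε x ^ 3 := funext fun x => fderiv_gE_apply hε x i
  rw [h]
  apply Continuous.sub
  · exact continuous_const.div wf_cont fun x => (wf_pos hε x).ne'
  · exact (((EuclideanSpace.proj i : E3 →L[ℝ] ℝ).continuous).pow 2).div
      (wf_cont.pow 3) fun x => pow_ne_zero 3 (wf_pos hε x).ne'

include hu hc in
lemma main_eps (hε : ε ≠ 0) :
    0 ≤ (∫ x, starRingEnd ℂ (-(∑ i, D2u u i x)) * ((wf ε x : ℂ) * u x)).re := by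
  have hDuc : ∀ i, Continuous (Du u i) := cont_Du hu
  have hwC : Continuous fun x => (wf ε x : ℂ) := Complex.continuous_ofReal.comp wf_cont
  have hgEC : ∀ i : Fin 3, Continuous fun x => (gE ε i x : ℂ) :=
    fun i => Complex.continuous_ofReal.comp (cont_gE hε)
  have hPc : ∀ i, Continuous (P u i) := fun i =>
    Complex.continuous_re.comp ((Complex.continuous_conj.comp hu.continuous).mul (hDuc i))
  have hGc : Continuous (G u) := continuous_finset_sum _ fun i _ => (hDuc i).norm.pow 2
  have hu0 : ∀ x, x ∉ tsupport u → u x = 0 := fun x hx => image_eq_zero_of_notMem_tsupport hx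
  have hρ0 : ∀ x, x ∉ tsupport u → ρ u x = 0 := fun x hx => by simp [ρ, hu0 x hx]
  have hP0 : ∀ (i : Fin 3) x, x ∉ tsupport u → P u i x = 0 := fun i x hx => by
    simp [P, hu0 x hx]
  have hG0 : ∀ x, x ∉ tsupport u → G u x = 0 := fun x hx => by
    simp [G, Du_zero _ hx]
  have i1 : ∀ i, Integrable (fun x => starRingEnd ℂ (D2u u i x) * ((wf ε x : ℂ) * u x)) volume :=
    fun i => integrable_aux hc
      ((Complex.continuous_conj.comp (cont_D2u hu i)).mul (hwC.mul hu.continuous))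
      fun x hx => by simp [hu0 x hx]
  have i2 : ∀ i, Integrable (fun x => starRingEnd ℂ (Du u i x) * ((gE ε i x : ℂ) * u x)) volume :=
    fun i => integrable_aux hc
      ((Complex.continuous_conj.comp (hDuc i)).mul ((hgEC i).mul hu.continuous))
      fun x hx => by simp [hu0 x hx]
  have i3 : ∀ i, Integrable
      (fun x => starRingEnd ℂ (Du u i x) * ((wf ε x : ℂ) * Du u i x)) volume :=
    fun i => integrable_aux hc
      ((Complex.continuous_conj.comp (hDuc i)).mul (hwC.mul (hDuc i)))
      fun x hx => by simp [Du_zero i hx]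
  have i4 : ∀ i, Integrable (fun x => gE ε i x * P u i x) volume :=
    fun i => integrable_aux hc ((cont_gE hε).mul (hPc i)) fun x hx => by simp [hP0 i x hx]
  have i5 : ∀ i, Integrable (fun x => fderiv ℝ (gE ε i) x (ee i) * ρ u x) volume :=
    fun i => integrable_aux hc ((cont_fderiv_gE hε i).mul (cont_rho hu))
      fun x hx => by simp [hρ0 x hx]
  have i6 : Integrable (fun x => lap ε x * ρ u x) volume := by
    have hlapc : Continuous (lap ε) := by
      apply Continuous.sub
      · exact continuous_const.div wf_cont fun x => (wf_pos hε x).ne'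
      · exact (continuous_norm.pow 2).div (wf_cont.pow 3)
          fun x => pow_ne_zero 3 (wf_pos hε x).ne'
    exact integrable_aux hc (hlapc.mul (cont_rho hu)) fun x hx => by simp [hρ0 x hx]
  have i7 : Integrable (fun x => ‖x‖ ^ 2 / wf ε x ^ 3 * ρ u x) volume :=
    integrable_aux hc
      (((continuous_norm.pow 2).div (wf_cont.pow 3)
        fun x => pow_ne_zero 3 (wf_pos hε x).ne').mul (cont_rho hu))
      fun x hx => by simp [hρ0 x hx]
  have i8i : ∀ i, Integrable (fun x => wf ε x * ‖Du u i x‖ ^ 2) volume :=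
    fun i => integrable_aux hc (wf_cont.mul ((hDuc i).norm.pow 2))
      fun x hx => by simp [Du_zero i hx]
  have i8 : Integrable (fun x => wf ε x * G u x) volume :=
    integrable_aux hc (wf_cont.mul hGc) fun x hx => by simp [hG0 x hx]
  -- Step 1: split total integral into pieces
  have e1 : (∫ x, starRingEnd ℂ (-(∑ i, D2u u i x)) * ((wf ε x : ℂ) * u x))
      = -∑ i, ∫ x, starRingEnd ℂ (D2u u i x) * ((wf ε x : ℂ) * u x) := by
    rw [← integral_finset_sum _ fun i _ => i1 i, ← integral_neg]
    congr 1
    funext x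
    simp [Finset.sum_mul]
  have e2 : ∀ i, (∫ x, starRingEnd ℂ (D2u u i x) * ((wf ε x : ℂ) * u x))
      = -((∫ x, starRingEnd ℂ (Du u i x) * ((gE ε i x : ℂ) * u x))
          + ∫ x, starRingEnd ℂ (Du u i x) * ((wf ε x : ℂ) * Du u i x)) := by
    intro i
    rw [stepA hu hc hε i]
    congr 1
    rw [← integral_add (i2 i) (i3 i)]
    congr 1
    funext x
    ring
  have hBre : ∀ i, (∫ x, starRingEnd ℂ (Du u i x) * ((gE ε i x : ℂ) * u x)).re
      = ∫ x, gE ε i x * P u i x := by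
    intro i
    rw [← RCLike.re_to_complex, ← integral_re (i2 i)]
    congr 1
    funext x
    simp [P, Complex.mul_re, Complex.mul_im]
    ring
  have hCre : ∀ i, (∫ x, starRingEnd ℂ (Du u i x) * ((wf ε x : ℂ) * Du u i x)).re
      = ∫ x, wf ε x * ‖Du u i x‖ ^ 2 := by
    intro i
    rw [← RCLike.re_to_complex, ← integral_re (i3 i)]
    congr 1
    funext x
    simp [Complex.mul_re, Complex.mul_im, Complex.sq_norm, Complex.normSq_apply]
    ring
  -- total real part
  have etot : (∫ x, starRingEnd ℂ (-(∑ i, D2u u i x)) * ((wf ε x : ℂ) * u x)).re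
      = (∑ i, ∫ x, gE ε i x * P u i x) + ∫ x, wf ε x * G u x := by
    rw [e1, Finset.sum_congr rfl fun i _ => e2 i]
    simp only [Finset.sum_neg_distrib, neg_neg]
    rw [Complex.re_sum]
    rw [Finset.sum_congr rfl fun i (_ : i ∈ Finset.univ) => (Complex.add_re _ _)]
    rw [Finset.sum_add_distrib]
    congr 1
    · exact Finset.sum_congr rfl fun i _ => hBre i
    · rw [Finset.sum_congr rfl fun i (_ : i ∈ Finset.univ) => hCre i,
        ← integral_finset_sum _ fun i _ => i8i i]
      congr 1
      funext x
      rw [G, Finset.mul_sum]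
  -- Step 3: relate ∑ ∫ gE * P to ∫ lap * ρ
  have hB2 : ∀ i, ∫ x, gE ε i x * P u i x
      = -(1 / 2) * ∫ x, fderiv ℝ (gE ε i) x (ee i) * ρ u x := by
    intro i
    have h := stepB hu hc hε i
    have h2 : ∫ x, gE ε i x * (2 * P u i x) = 2 * ∫ x, gE ε i x * P u i x := by
      rw [← integral_const_mul]
      congr 1
      funext x
      ring
    rw [h2] at h
    linarith
  have hSsum : ∑ i, ∫ x, gE ε i x * P u i x = -(1 / 2) * ∫ x, lap ε x * ρ u x := by
    rw [Finset.sum_congr rfl fun i (_ : i ∈ Finset.univ) => hB2 i, ← Finset.mul_sum]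
    congr 1
    rw [← integral_finset_sum _ fun i _ => i5 i]
    congr 1
    funext x
    rw [← Finset.sum_mul, sum_fderiv_gE hε x]
  -- Step 4: inequalities
  have hHS : ∫ x, ‖x‖ ^ 2 / wf ε x ^ 3 * ρ u x ≤ (1 / 2) * ∫ x, lap ε x * ρ u x := by
    rw [← integral_const_mul]
    apply integral_mono i7 (i6.const_mul _)
    intro x
    have hw := wf_pos hε x
    have hρx : 0 ≤ ρ u x := by rw [ρ]; positivity
    have hsq : ‖x‖ ^ 2 ≤ wf ε x ^ 2 := by rw [wf_sq]; nlinarith [sq_nonneg ε]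
    show ‖x‖ ^ 2 / wf ε x ^ 3 * ρ u x ≤ 1 / 2 * (lap ε x * ρ u x)
    rw [← sub_nonneg]
    have hrw : 1 / 2 * (lap ε x * ρ u x) - ‖x‖ ^ 2 / wf ε x ^ 3 * ρ u x
        = 3 * ρ u x * (wf ε x ^ 2 - ‖x‖ ^ 2) / (2 * wf ε x ^ 3) := by
      rw [lap]
      field_simp
      ring
    rw [hrw]
    apply div_nonneg _ (by positivity)
    nlinarith
  have hkey : -(∑ i, ∫ x, gE ε i x * P u i x)
      ≤ 1 / 2 * (∫ x, ‖x‖ ^ 2 / wf ε x ^ 3 * ρ u x) + 1 / 2 * ∫ x, wf ε x * G u x := by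
    have lhs_eq : -(∑ i, ∫ x, gE ε i x * P u i x) = ∫ x, -∑ i, gE ε i x * P u i x := by
      rw [← integral_finset_sum _ fun i _ => i4 i, ← integral_neg]
    rw [lhs_eq, ← integral_const_mul, ← integral_const_mul,
      ← integral_add ((i7.const_mul _)) ((i8.const_mul _))]
    apply integral_mono _ _ fun x => key_pointwise hu hε x
    · exact (integrable_finset_sum _ fun i _ => i4 i).neg
    · exact (i7.const_mul _).add (i8.const_mul _)
  rw [etot, hSsum]
  rw [hSsum] at hkey
  linarith [hHS, hkey]

end U
end NegLap

theorem neg_laplacian_mul_norm_nonneg (u : EuclideanSpace ℝ (Fin 3) → ℂ)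
    (hu : ContDiff ℝ (⊤ : ℕ∞) u) (hc : HasCompactSupport u) :
    0 ≤ (∫ x : EuclideanSpace ℝ (Fin 3),
      (starRingEnd ℂ) (-(∑ i : Fin 3,
          fderiv ℝ (fun y => fderiv ℝ u y (EuclideanSpace.single i 1)) x
            (EuclideanSpace.single i 1))) *
        ((‖x‖ : ℂ) * u x)).re := by
  open NegLap in
  have hD2c : Continuous fun x => ∑ i, D2u u i x :=
    continuous_finset_sum _ fun i _ => cont_D2u hu i
  set F : ℝ → E3 → ℂ := fun ε x =>
    starRingEnd ℂ (-(∑ i, D2u u i x)) * ((wf ε x : ℂ) * u x) with hF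
  have hF0 : (fun x : E3 =>
      (starRingEnd ℂ) (-(∑ i : Fin 3,
          fderiv ℝ (fun y => fderiv ℝ u y (EuclideanSpace.single i 1)) x
            (EuclideanSpace.single i 1))) * ((‖x‖ : ℂ) * u x)) = F 0 := by
    funext x
    have : wf 0 x = ‖x‖ := by
      rw [wf]
      simp [Real.sqrt_sq (norm_nonneg x)]
    rw [hF]
    simp only [this]
    rfl
  have hu0 : ∀ x, x ∉ tsupport u → u x = 0 := fun x hx => image_eq_zero_of_notMem_tsupport hx
  set bound : E3 → ℝ := fun x =>
    ‖∑ i, D2u u i x‖ * (Real.sqrt (‖x‖ ^ 2 + 1) * ‖u x‖) with hbound_def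
  have hbint : Integrable bound volume := by
    apply integrable_aux hc
    · exact hD2c.norm.mul
        ((Real.continuous_sqrt.comp ((continuous_norm.pow 2).add continuous_const)).mul
          hu.continuous.norm)
    · intro x hx
      simp [hbound_def, hu0 x hx]
  have htend : Filter.Tendsto (fun ε => ∫ x, F ε x) (nhdsWithin 0 (Set.Ioi (0:ℝ)))
      (nhds (∫ x, F 0 x)) := by
    apply tendsto_integral_filter_of_dominated_convergence bound
    · filter_upwards with ε
      exact (((Complex.continuous_conj.comp hD2c.neg)).mul
        ((Complex.continuous_ofReal.comp wf_cont).mul hu.continuous)).aestronglyMeasurable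
    · filter_upwards [Ioo_mem_nhdsGT (by norm_num : (0:ℝ) < 1)] with ε hε
      filter_upwards with x
      have hw0 : 0 ≤ wf ε x := Real.sqrt_nonneg _
      have hwle : wf ε x ≤ Real.sqrt (‖x‖ ^ 2 + 1) := by
        apply Real.sqrt_le_sqrt
        nlinarith [hε.1, hε.2]
      rw [hF]
      simp only [norm_mul, RCLike.norm_conj, norm_neg, Complex.norm_real]
      rw [hbound_def]
      have hn : (0:ℝ) ≤ ‖∑ i, D2u u i x‖ := norm_nonneg _
      have hwn : ‖wf ε x‖ = wf ε x := by rw [Real.norm_eq_abs, abs_of_nonneg hw0]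
      rw [hwn]
      have hun : (0:ℝ) ≤ ‖u x‖ := norm_nonneg _
      exact mul_le_mul_of_nonneg_left (mul_le_mul_of_nonneg_right hwle hun) hn
    · exact hbint
    · filter_upwards with x
      have hcont : Continuous fun ε : ℝ => (wf ε x : ℂ) :=
        Complex.continuous_ofReal.comp
          (Real.continuous_sqrt.comp (continuous_const.add (continuous_pow 2)))
      have : Filter.Tendsto (fun ε : ℝ => F ε x) (nhds 0) (nhds (F 0 x)) := by
        rw [hF]
        exact (tendsto_const_nhds.mul ((hcont.tendsto 0).mul tendsto_const_nhds))
      exact this.mono_left nhdsWithin_le_nhds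
  have htendre : Filter.Tendsto (fun ε => (∫ x, F ε x).re) (nhdsWithin 0 (Set.Ioi (0:ℝ)))
      (nhds ((∫ x, F 0 x).re)) := (Complex.continuous_re.tendsto _).comp htend
  rw [hF0]
  apply ge_of_tendsto htendre
  filter_upwards [self_mem_nhdsWithin] with ε hε
  exact main_eps hu hc (ne_of_gt hε)
end
end

section
/- For every smooth compactly supported u : ℝ³ → ℂ with ‖u‖_{L²} = 1, Re ⟨(-Δ)u, |x|² u⟩ ≥ -3/2; i.e., (-Δ)|x|² + |x|²(-Δ) ≥ -3/2 in L²(ℝ³), and the constant 3/2 is sharp. -/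
open MeasureTheory
open scoped InnerProductSpace

private lemma norm_sq_eq_sum3 (x : EuclideanSpace ℝ (Fin 3)) : ‖x‖ ^ 2 = ∑ i, (x i) ^ 2 := by
  rw [EuclideanSpace.norm_eq, Real.sq_sqrt (by positivity)]
  simp [Real.norm_eq_abs, sq_abs]

theorem neg_laplacian_mul_normSq_form_bound (u : EuclideanSpace ℝ (Fin 3) → ℂ)
    (hu : ContDiff ℝ (⊤ : ℕ∞) u) (hc : HasCompactSupport u) :
    (∫ x : EuclideanSpace ℝ (Fin 3),
      ∑ i : Fin 3,
        (starRingEnd ℂ) (fderiv ℝ u x (EuclideanSpace.single i 1)) *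
          fderiv ℝ (fun y => ((‖y‖ : ℂ) ^ 2) * u y) x (EuclideanSpace.single i 1)).re ≥
      -(3 / 4) * ∫ x, ‖u x‖ ^ 2 := by
  classical
  have hud : Differentiable ℝ u := hu.differentiable (by simp)
  have hu' : ContDiff ℝ ((⊤:ℕ∞) : WithTop ℕ∞) u := hu.of_le (by simp)
  have hwfun : (fun y : EuclideanSpace ℝ (Fin 3) => ((‖y‖ : ℂ) ^ 2) * u y)
      = fun y => ((‖y‖ ^ 2 : ℝ) : ℂ) * u y := by
    funext y; push_cast; ring
  rw [hwfun]
  set w : EuclideanSpace ℝ (Fin 3) → ℂ := fun y => ((‖y‖ ^ 2 : ℝ) : ℂ) * u y with hw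
  set G : EuclideanSpace ℝ (Fin 3) → ℝ := fun x => ‖u x‖ ^ 2 with hG
  -- smoothness
  have hwsmooth : ContDiff ℝ (⊤ : ℕ∞) w :=
    ((Complex.ofRealCLM.contDiff).comp (contDiff_norm_sq ℝ)).mul hu
  have hgsm : ContDiff ℝ (⊤ : ℕ∞) G := hu.norm_sq ℂ
  -- derivative of w
  have hWder : ∀ x : EuclideanSpace ℝ (Fin 3), HasFDerivAt w
      ((((‖x‖ ^ 2 : ℝ) : ℂ)) • (fderiv ℝ u x) +
        (u x) • (Complex.ofRealCLM.comp (2 • (innerSL ℝ x)))) x := by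
    intro x
    have h1 : HasFDerivAt (fun y : EuclideanSpace ℝ (Fin 3) => ((‖y‖ ^ 2 : ℝ) : ℂ))
        (Complex.ofRealCLM.comp (2 • (innerSL ℝ x))) x :=
      Complex.ofRealCLM.hasFDerivAt.comp x ((hasFDerivAt_id x).norm_sq)
    exact h1.mul (hud x).hasFDerivAt
  have hWev : ∀ (x : EuclideanSpace ℝ (Fin 3)) (i : Fin 3),
      fderiv ℝ w x (EuclideanSpace.single i 1)
      = ((‖x‖ ^ 2 : ℝ) : ℂ) * fderiv ℝ u x (EuclideanSpace.single i 1)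
        + u x * ((2 * x i : ℝ) : ℂ) := by
    intro x i
    rw [(hWder x).fderiv]
    simp [EuclideanSpace.inner_single_right, smul_eq_mul, real_inner_smul_left, two_smul]
    ring
  -- derivative of G
  have hgder : ∀ (x : EuclideanSpace ℝ (Fin 3)) (v : EuclideanSpace ℝ (Fin 3)),
      fderiv ℝ G x v = 2 * ((starRingEnd ℂ) (u x) * fderiv ℝ u x v).re := by
    intro x v
    rw [hG, ((hud x).hasFDerivAt.norm_sq).fderiv]
    simp [two_smul, smul_eq_mul]
    ring
  -- compact supports and continuity
  have hcG : HasCompactSupport G := hc.comp_left (g := fun z : ℂ => ‖z‖ ^ 2) (by simp)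
  have hcontU : Continuous (fderiv ℝ u) := (contDiff_infty_iff_fderiv.mp hu').2.continuous
  have hcontW : Continuous (fderiv ℝ w) := (contDiff_infty_iff_fderiv.mp (hwsmooth.of_le (by simp))).2.continuous
  have hcontG : Continuous (fderiv ℝ G) := (contDiff_infty_iff_fderiv.mp (hgsm.of_le (by simp))).2.continuous
  have hcontd : ∀ i : Fin 3, Continuous (fun x => fderiv ℝ u x (EuclideanSpace.single i 1)) :=
    fun i => hcontU.clm_apply continuous_const
  have hcontdw : ∀ i : Fin 3, Continuous (fun x => fderiv ℝ w x (EuclideanSpace.single i 1)) :=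
    fun i => hcontW.clm_apply continuous_const
  have hcontdg : ∀ i : Fin 3, Continuous (fun x => fderiv ℝ G x (EuclideanSpace.single i 1)) :=
    fun i => hcontG.clm_apply continuous_const
  have hcd : ∀ i : Fin 3, HasCompactSupport (fun x => fderiv ℝ u x (EuclideanSpace.single i 1)) :=
    fun i => hc.fderiv_apply ℝ (EuclideanSpace.single i 1)
  have hcdg : ∀ i : Fin 3, HasCompactSupport (fun x => fderiv ℝ G x (EuclideanSpace.single i 1)) :=
    fun i => hcG.fderiv_apply ℝ (EuclideanSpace.single i 1)
  -- the main real-valued functions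
  set F1 : EuclideanSpace ℝ (Fin 3) → ℝ :=
    fun x => ‖x‖ ^ 2 * ∑ i, ‖fderiv ℝ u x (EuclideanSpace.single i 1)‖ ^ 2 with hF1
  set F2 : EuclideanSpace ℝ (Fin 3) → ℝ :=
    fun x => ∑ i, x i * fderiv ℝ G x (EuclideanSpace.single i 1) with hF2
  -- integrabilities
  have hIG : Integrable G := (hu.continuous.norm.pow 2).integrable_of_hasCompactSupport hcG
  have hIF1 : Integrable F1 := by
    have hcs : HasCompactSupport
        (fun x => ∑ i, ‖fderiv ℝ u x (EuclideanSpace.single i 1)‖ ^ 2) :=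
      (hc.fderiv ℝ).comp_left
        (g := fun L : EuclideanSpace ℝ (Fin 3) →L[ℝ] ℂ => ∑ i, ‖L (EuclideanSpace.single i 1)‖ ^ 2)
        (by simp)
    have hcs1 : HasCompactSupport F1 := hcs.mul_left
    exact (((continuous_norm.pow 2).mul (by fun_prop)).integrable_of_hasCompactSupport hcs1)
  have hIF2i : ∀ i : Fin 3,
      Integrable (fun x => x i * fderiv ℝ G x (EuclideanSpace.single i 1)) := by
    intro i
    have hcs : HasCompactSupport (fun x => x i * fderiv ℝ G x (EuclideanSpace.single i 1)) :=
      (hcdg i).mul_left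
    exact (((by fun_prop : Continuous (fun x : EuclideanSpace ℝ (Fin 3) => x i)).mul
      (hcontdg i)).integrable_of_hasCompactSupport hcs)
  have hIF2 : Integrable F2 := by
    rw [hF2]
    have := integrable_finset_sum (μ := (volume : Measure (EuclideanSpace ℝ (Fin 3))))
      (Finset.univ) (fun i _ => hIF2i i)
    simpa using this
  -- Phi
  set Φ : EuclideanSpace ℝ (Fin 3) → ℂ := fun x => ∑ i : Fin 3,
    (starRingEnd ℂ) (fderiv ℝ u x (EuclideanSpace.single i 1)) *
      fderiv ℝ w x (EuclideanSpace.single i 1) with hΦ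
  have hIΦ : Integrable Φ := by
    rw [hΦ]
    refine integrable_finset_sum _ (fun i _ => ?_)
    have hcs : HasCompactSupport (fun x =>
        (starRingEnd ℂ) (fderiv ℝ u x (EuclideanSpace.single i 1))) :=
      (hcd i).comp_left (g := starRingEnd ℂ) (by simp)
    have hcs2 : HasCompactSupport (fun x =>
        (starRingEnd ℂ) (fderiv ℝ u x (EuclideanSpace.single i 1)) *
          fderiv ℝ w x (EuclideanSpace.single i 1)) := hcs.mul_right
    exact ((continuous_star.comp (hcontd i)).mul (hcontdw i)).integrable_of_hasCompactSupport hcs2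
  -- pointwise identity
  have hpt : ∀ x, (Φ x).re = F1 x + F2 x := by
    intro x
    rw [hΦ, hF1, hF2]
    simp only [Complex.re_sum]
    rw [Finset.mul_sum, ← Finset.sum_add_distrib]
    refine Finset.sum_congr rfl (fun i _ => ?_)
    rw [hWev x i, hgder]
    simp [Complex.mul_re, Complex.add_re, Complex.add_im, Complex.mul_im,
      Complex.sq_norm, Complex.normSq_apply, Complex.ofReal_re, Complex.ofReal_im]
    simp only [← Complex.ofReal_pow, Complex.ofReal_re]
    ring
  -- integration by parts
  have hproj : ∀ (i : Fin 3) (x : EuclideanSpace ℝ (Fin 3)),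
      fderiv ℝ (fun y : EuclideanSpace ℝ (Fin 3) => y i) x (EuclideanSpace.single i 1) = 1 := by
    intro i x
    have he : (fun y : EuclideanSpace ℝ (Fin 3) => y i) = ⇑(EuclideanSpace.proj (𝕜 := ℝ) i) := rfl
    rw [he, ContinuousLinearMap.fderiv]
    simp
  have hibp : ∀ i : Fin 3,
      ∫ x, x i * fderiv ℝ G x (EuclideanSpace.single i 1) = - ∫ x, G x := by
    intro i
    have hfd : Differentiable ℝ (fun y : EuclideanSpace ℝ (Fin 3) => y i) :=
      (EuclideanSpace.proj (𝕜 := ℝ) i).differentiable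
    have hgd : Differentiable ℝ G := hgsm.differentiable (by simp)
    have h1 : Integrable (fun x : EuclideanSpace ℝ (Fin 3) =>
        fderiv ℝ (fun y : EuclideanSpace ℝ (Fin 3) => y i) x (EuclideanSpace.single i 1) * G x) := by
      simpa [hproj i] using hIG
    have h3 : Integrable (fun x : EuclideanSpace ℝ (Fin 3) => x i * G x) := by
      have hcs : HasCompactSupport (fun x : EuclideanSpace ℝ (Fin 3) => x i * G x) := hcG.mul_left
      exact (((EuclideanSpace.proj (𝕜 := ℝ) i).continuous.mul
        (hu.continuous.norm.pow 2)).integrable_of_hasCompactSupport hcs)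
    have key := integral_mul_fderiv_eq_neg_fderiv_mul_of_integrable h1 (hIF2i i) h3 (fun x _ => hfd x) (fun x _ => hgd x)
    rw [key]
    simp only [hproj i, one_mul]
  have hsum2 : ∫ x, F2 x = -(3 * ∫ x, G x) := by
    rw [hF2, integral_finset_sum _ (fun i _ => hIF2i i)]
    simp only [hibp]
    simp
  -- pointwise bound
  have hpb : ∀ x, -F2 x ≤ (2/3) * F1 x + (3/2) * G x := by
    intro x
    rw [hF1, hF2, hG]
    set z : Fin 3 → ℂ := (fun i => fderiv ℝ u x (EuclideanSpace.single i 1)) with hz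
    simp only [show ∀ i : Fin 3, fderiv ℝ u x (EuclideanSpace.single i 1) = z i from fun i => rfl]
    set D : ℂ := ∑ i, (x i : ℝ) • z i with hD
    have hF2x : ∑ i, x i * fderiv ℝ G x (EuclideanSpace.single i 1)
        = 2 * ((starRingEnd ℂ) (u x) * D).re := by
      have hre : ((starRingEnd ℂ) (u x) * D).re = ∑ i, x i * ((starRingEnd ℂ) (u x) * z i).re := by
        rw [hD, Finset.mul_sum, Complex.re_sum]
        refine Finset.sum_congr rfl (fun i _ => ?_)
        simp [Complex.real_smul, Complex.mul_re, Complex.mul_im, Complex.ofReal_re,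
          Complex.ofReal_im]
        ring
      rw [hre, Finset.mul_sum]
      refine Finset.sum_congr rfl (fun i _ => ?_)
      rw [hgder]
      ring
    rw [hF2x]
    have h1 : -(2 * ((starRingEnd ℂ) (u x) * D).re) ≤ 2 * (‖u x‖ * ‖D‖) := by
      have ha := Complex.abs_re_le_norm ((starRingEnd ℂ) (u x) * D)
      have hn : ‖(starRingEnd ℂ) (u x) * D‖ = ‖u x‖ * ‖D‖ := by
        simp [map_mul]
      rw [hn] at ha
      have := neg_abs_le (((starRingEnd ℂ) (u x) * D).re)
      linarith
    have h2 : ‖D‖ ≤ ∑ i, |x i| * ‖z i‖ := by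
      rw [hD]
      refine (norm_sum_le _ _).trans ?_
      refine Finset.sum_le_sum (fun i _ => ?_)
      rw [norm_smul, Real.norm_eq_abs]
    have h3 : (∑ i, |x i| * ‖z i‖) ^ 2 ≤ (∑ i, (x i)^2) * (∑ i, ‖z i‖^2) := by
      have := Finset.sum_mul_sq_le_sq_mul_sq Finset.univ (fun i => |x i|) (fun i => ‖z i‖)
      simpa [sq_abs] using this
    have h4 : ‖x‖^2 = ∑ i, (x i)^2 := norm_sq_eq_sum3 x
    have h5 : ‖D‖^2 ≤ ‖x‖^2 * ∑ i, ‖z i‖^2 := by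
      rw [h4]
      calc ‖D‖^2 ≤ (∑ i, |x i| * ‖z i‖)^2 := by
            have h2' : (0:ℝ) ≤ ∑ i, |x i| * ‖z i‖ := le_trans (norm_nonneg D) h2
            nlinarith [norm_nonneg D]
        _ ≤ _ := h3
    nlinarith [h1, h5, sq_nonneg (2*‖D‖ - 3*‖u x‖), norm_nonneg D, norm_nonneg (u x)]
  -- assembly
  have hint_eq : (∫ x, Φ x).re = (∫ x, F1 x) + (∫ x, F2 x) := by
    have h0 : ∫ x, (Φ x).re = (∫ x, Φ x).re := by
      simpa using integral_re hIΦ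
    rw [← h0]
    rw [show (fun x => (Φ x).re) = fun x => F1 x + F2 x from funext hpt]
    exact integral_add hIF1 hIF2
  have h6 : ∫ x, -F2 x ≤ ∫ x, ((2/3) * F1 x + (3/2) * G x) :=
    integral_mono hIF2.neg ((hIF1.const_mul _).add (hIG.const_mul _)) hpb
  rw [integral_neg, hsum2] at h6
  rw [integral_add (hIF1.const_mul _) (hIG.const_mul _), integral_const_mul,
    integral_const_mul] at h6
  have hM0 : 0 ≤ ∫ x, G x := integral_nonneg (fun x => by rw [hG]; positivity)
  rw [ge_iff_le, hint_eq, hsum2]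
  linarith
end
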